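/- If C is a storing cell of an axis-aligned square σ of side length s, then side(C) ≤ s < 4·side(C), where side(C) denotes the side length of C. -/
import Mathlib


open Set

/-- A dyadic cell at level `level` (side length `2^level`) with lower-left corner
`(a·2^level, b·2^level)`. -/
structure DyadicCell where
  level : ℤ
  a : ℤ
  b : ℤ
deriving DecidableEq

/-- The side length of a dyadic cell. -/
noncomputable def DyadicCell.side (C : DyadicCell) : ℝ := 2 ^ C.level

/-- The dyadic cell as a subset of the plane. -/
noncomputable def DyadicCell.toSet (C : DyadicCell) : Set (ℝ × ℝ) :=
  Set.Icc ((C.a : ℝ) * 2 ^ C.level) ((C.a + 1 : ℝ) * 2 ^ C.level) ×ˢ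
    Set.Icc ((C.b : ℝ) * 2 ^ C.level) ((C.b + 1 : ℝ) * 2 ^ C.level)

/-- `5C`: the square obtained by scaling the cell `C` by a factor `5` about its center. -/
noncomputable def DyadicCell.scale5 (C : DyadicCell) : Set (ℝ × ℝ) :=
  Set.Icc ((C.a - 2 : ℝ) * 2 ^ C.level) ((C.a + 3 : ℝ) * 2 ^ C.level) ×ˢ
    Set.Icc ((C.b - 2 : ℝ) * 2 ^ C.level) ((C.b + 3 : ℝ) * 2 ^ C.level)

/-- An axis-aligned square `[x, x+s] × [y, y+s]` of side length `s > 0`. -/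
structure Square where
  x : ℝ
  y : ℝ
  s : ℝ
  s_pos : 0 < s

/-- The square as a subset of the plane. -/
noncomputable def Square.toSet (σ : Square) : Set (ℝ × ℝ) :=
  Set.Icc σ.x (σ.x + σ.s) ×ˢ Set.Icc σ.y (σ.y + σ.s)

/-- The center of a square. -/
noncomputable def Square.center (σ : Square) : ℝ × ℝ := (σ.x + σ.s / 2, σ.y + σ.s / 2)

/-- `C` is a storing cell of `σ`: a dyadic cell of maximal side length among those that
contain the center of `σ` and are contained in `σ`. -/
def IsStoringCell (σ : Square) (C : DyadicCell) : Prop :=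
  σ.center ∈ C.toSet ∧ C.toSet ⊆ σ.toSet ∧
    ∀ D : DyadicCell, σ.center ∈ D.toSet → D.toSet ⊆ σ.toSet → D.side ≤ C.side

theorem statement1 (σ : Square) (C : DyadicCell) (h : IsStoringCell σ C) :
    C.side ≤ σ.s ∧ σ.s < 4 * C.side := by
  obtain ⟨hc, hsub, hmax⟩ := h
  have hpow : (0:ℝ) < 2 ^ C.level := by positivity
  have hlo : ((C.a : ℝ) * 2 ^ C.level, (C.b : ℝ) * 2 ^ C.level) ∈ C.toSet := by
    simp only [DyadicCell.toSet, Set.mem_prod, Set.mem_Icc]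
    refine ⟨⟨le_rfl, ?_⟩, le_rfl, ?_⟩ <;> nlinarith
  have hhi : ((C.a + 1 : ℝ) * 2 ^ C.level, (C.b : ℝ) * 2 ^ C.level) ∈ C.toSet := by
    simp only [DyadicCell.toSet, Set.mem_prod, Set.mem_Icc]
    refine ⟨⟨?_, le_rfl⟩, le_rfl, ?_⟩ <;> nlinarith
  have h1 := hsub hlo
  have h2 := hsub hhi
  simp only [Square.toSet, Set.mem_prod, Set.mem_Icc] at h1 h2
  have hside : C.side ≤ σ.s := by
    simp only [DyadicCell.side]
    nlinarith [h1.1.1, h2.1.2]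
  refine ⟨hside, ?_⟩
  by_contra h4
  push_neg at h4
  have h4' : 4 * (2:ℝ) ^ C.level ≤ σ.s := by simpa [DyadicCell.side] using h4
  have hu2 : (2:ℝ) ^ (C.level + 1) = 2 * 2 ^ C.level := by
    rw [zpow_add_one₀ (by norm_num : (2:ℝ) ≠ 0)]; ring
  have hupos : (0:ℝ) < 2 ^ (C.level + 1) := by positivity
  set cx : ℝ := σ.x + σ.s / 2 with hcx
  set cy : ℝ := σ.y + σ.s / 2 with hcy
  have hax : ((⌊cx / 2 ^ (C.level + 1)⌋ : ℝ)) * 2 ^ (C.level + 1) ≤ cx := by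
    rw [← le_div_iff₀ hupos]; exact Int.floor_le _
  have hax' : cx < ((⌊cx / 2 ^ (C.level + 1)⌋ : ℝ) + 1) * 2 ^ (C.level + 1) := by
    rw [← div_lt_iff₀ hupos]; exact Int.lt_floor_add_one _
  have hay : ((⌊cy / 2 ^ (C.level + 1)⌋ : ℝ)) * 2 ^ (C.level + 1) ≤ cy := by
    rw [← le_div_iff₀ hupos]; exact Int.floor_le _
  have hay' : cy < ((⌊cy / 2 ^ (C.level + 1)⌋ : ℝ) + 1) * 2 ^ (C.level + 1) := by
    rw [← div_lt_iff₀ hupos]; exact Int.lt_floor_add_one _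
  set D : DyadicCell := ⟨C.level + 1, ⌊cx / 2 ^ (C.level + 1)⌋, ⌊cy / 2 ^ (C.level + 1)⌋⟩ with hD
  have hcD : σ.center ∈ D.toSet := by
    simp only [DyadicCell.toSet, hD, Square.center, Set.mem_prod, Set.mem_Icc]
    exact ⟨⟨hax, le_of_lt hax'⟩, hay, le_of_lt hay'⟩
  have hDsub : D.toSet ⊆ σ.toSet := by
    rintro ⟨p, q⟩ hpq
    simp only [DyadicCell.toSet, hD, Set.mem_prod, Set.mem_Icc] at hpq
    obtain ⟨⟨hp1, hp2⟩, hq1, hq2⟩ := hpq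
    simp only [Square.toSet, Set.mem_prod, Set.mem_Icc]
    rw [hu2] at hp1 hp2 hq1 hq2 hax hax' hay hay'
    refine ⟨⟨?_, ?_⟩, ?_, ?_⟩ <;> nlinarith
  have hle := hmax D hcD hDsub
  simp only [DyadicCell.side, hD] at hle
  rw [hu2] at hle
  nlinarith
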